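/- Let M be a set of 4 items and let two agents have the same strict linear order π₁ = π₂ on M. Then no allocation of all 4 items between the two agents is SD-EFX with respect to (π₁, π₂). -/

import Mathlib

/-- An order on items is encoded as a ranking bijection `π : M ≃ Fin m`, where smaller rank
means more preferred.  `sdDom π A B` says `A` sd-dominates `B` with respect to `π`. -/
def sdDom {M : Type*} [DecidableEq M] {m : ℕ} (π : M ≃ Fin m) (A B : Finset M) : Prop :=
  B.card ≤ A.card ∧ ∀ k < B.card,
    (Finset.sort (A.image fun a => ((π a : Fin m) : ℕ)) (· ≤ ·)).getD k 0 ≤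
    (Finset.sort (B.image fun b => ((π b : Fin m) : ℕ)) (· ≤ ·)).getD k 0

/-- `A` is an allocation of the set `S` of items among `n` agents. -/
def IsAllocation {M : Type*} [DecidableEq M] {n : ℕ} (A : Fin n → Finset M) (S : Finset M) :
    Prop :=
  (∀ i j : Fin n, i ≠ j → Disjoint (A i) (A j)) ∧ Finset.univ.biUnion A = S

/-- The allocation `A` is SD-envy-free up to any item with respect to the orders `π`. -/
def SDEFX {M : Type*} [DecidableEq M] {n m : ℕ} (π : Fin n → (M ≃ Fin m))
    (A : Fin n → Finset M) : Prop :=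
  ∀ i j : Fin n, (A j).Nonempty → ∀ g ∈ A j, sdDom (π i) (A i) ((A j).erase g)

/-! With a common order, EFX towards a bundle `B` forces `|B| ≤ |A| + 1`, so an even number
of items is split evenly. Let `t` be the top item, say in `B`. If `|B| ≥ 2`, removing some
`g ≠ t` from `B` leaves a bundle whose best item is `t`, and sd-dominance would require `A` to
contain an item at least as good as `t`, i.e. `t` itself. -/

open Finset

lemma Finset.sort_getD_zero_eq_min' {α : Type*} [LinearOrder α] {s : Finset α}
    (hs : s.Nonempty) (d : α) : (s.sort (· ≤ ·)).getD 0 d = s.min' hs := by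
  rw [min'_eq_sorted_zero, List.getD_eq_getElem]

section SdDom

variable {M : Type*} [DecidableEq M] {m : ℕ} {π : M ≃ Fin m} {A B : Finset M}

lemma sdDom.card_le_succ_card_erase {g : M} (h : sdDom π A (B.erase g)) (hg : g ∈ B) :
    B.card ≤ A.card + 1 := by
  have := h.1
  rw [card_erase_of_mem hg] at this
  omega

lemma sdDom.exists_mem_le {b : M} (h : sdDom π A B) (hb : b ∈ B) : ∃ a ∈ A, π a ≤ π b := by
  have hBpos : 0 < B.card := card_pos.mpr ⟨b, hb⟩
  have hB : (B.image fun x => (π x : ℕ)).Nonempty := ⟨_, mem_image_of_mem _ hb⟩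
  have hA : (A.image fun x => (π x : ℕ)).Nonempty :=
    (card_pos.mp (hBpos.trans_le h.1)).image _
  have hmin := h.2 0 hBpos
  rw [sort_getD_zero_eq_min' hA, sort_getD_zero_eq_min' hB] at hmin
  obtain ⟨a, ha, hrank⟩ := mem_image.mp (min'_mem _ hA)
  exact ⟨a, ha, Fin.le_def.mpr (hrank ▸ hmin.trans (min'_le _ _ (mem_image_of_mem _ hb)))⟩

theorem false_of_sdDom_erase_of_even {t : M} (htop : ∀ x, π t ≤ π x) (hAB : Disjoint A B)
    (heven : Even (A.card + B.card)) (hfour : 4 ≤ A.card + B.card) (ht : t ∈ B)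
    (hA : ∀ g ∈ B, sdDom π A (B.erase g)) (hB : ∀ g ∈ A, sdDom π B (A.erase g)) : False := by
  obtain ⟨r, hr⟩ := heven
  have hB_le := (hA t ht).card_le_succ_card_erase ht
  obtain ⟨a, ha⟩ : A.Nonempty := card_pos.mp (by omega)
  have hA_le := (hB a ha).card_le_succ_card_erase ha
  obtain ⟨g, hg, hgt⟩ := exists_mem_ne (show 1 < B.card by omega) t
  obtain ⟨a', ha', hle⟩ := (hA g hg).exists_mem_le (mem_erase.mpr ⟨hgt.symm, ht⟩)
  have hat : a' = t := π.injective (le_antisymm hle (htop a'))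
  exact disjoint_left.mp hAB ha' (hat ▸ ht)

end SdDom

lemma IsAllocation.disjoint_fin_two {M : Type*} [DecidableEq M] {A : Fin 2 → Finset M}
    {S : Finset M} (h : IsAllocation A S) : Disjoint (A 0) (A 1) :=
  h.1 0 1 (by decide)

lemma IsAllocation.union_fin_two {M : Type*} [DecidableEq M] {A : Fin 2 → Finset M}
    {S : Finset M} (h : IsAllocation A S) : A 0 ∪ A 1 = S := by
  rw [← h.2]
  ext x
  simp [Fin.exists_fin_two]

/-- With `4` items and two agents having the same strict linear order, no
allocation of all `4` items is SD-EFX. -/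
theorem no_sdefx_four_items {M : Type*} [Fintype M] [DecidableEq M]
    (hM : Fintype.card M = 4) (π₁ π₂ : M ≃ Fin 4) (hππ : π₁ = π₂) :
    ¬ ∃ A : Fin 2 → Finset M, IsAllocation A Finset.univ ∧ SDEFX ![π₁, π₂] A := by
  subst hππ
  rintro ⟨A, hA, hEFX⟩
  have hdom : ∀ i j : Fin 2, ∀ g ∈ A j, sdDom π₁ (A i) ((A j).erase g) := fun i j g hg => by
    simpa [show ![π₁, π₁] i = π₁ by fin_cases i <;> rfl] using hEFX i j ⟨g, hg⟩ g hg
  have hcard : (A 0).card + (A 1).card = 4 := by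
    rw [← card_union_of_disjoint hA.disjoint_fin_two, hA.union_fin_two, card_univ, hM]
  have htop : ∀ x, π₁ (π₁.symm 0) ≤ π₁ x := fun x => by simp
  rcases mem_union.mp (hA.union_fin_two ▸ mem_univ (π₁.symm 0)) with h | h
  · exact false_of_sdDom_erase_of_even htop hA.disjoint_fin_two.symm ⟨2, by omega⟩
      (by omega) h (hdom 1 0) (hdom 0 1)
  · exact false_of_sdDom_erase_of_even htop hA.disjoint_fin_two ⟨2, by omega⟩
      (by omega) h (hdom 0 1) (hdom 1 0)
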